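/- For positive integers a, b, c, with A = a+b, B = a+c, C = b+c, m = a+b+c-2, the determinant of the middle multiplication matrix U_m on R = ℤ[x,y,z]/(x^A,y^B,z^C) equals ± its permanent; equivalently, all nonzero permutation terms in the expansion of det(U_m) have the same sign. -/

import Mathlib

open Matrix

/-- Monomials `x^i y^j z^k` of degree `s` nonzero in `ℤ[x,y,z]/(x^A,y^B,z^C)`. -/
def Mon (A B C s : ℕ) : Type :=
  {v : Fin A × Fin B × Fin C // (v.1 : ℕ) + (v.2.1 : ℕ) + (v.2.2 : ℕ) = s}

instance (A B C s : ℕ) : Fintype (Mon A B C s) := by unfold Mon; infer_instance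
instance (A B C s : ℕ) : DecidableEq (Mon A B C s) := by unfold Mon; infer_instance

/-- The matrix of multiplication by `x+y+z` in the monomial bases. -/
def Umat (A B C r : ℕ) : Matrix (Mon A B C (r+1)) (Mon A B C r) ℤ :=
  Matrix.of fun w v =>
    if (v.1.1 : ℕ) ≤ (w.1.1 : ℕ) ∧ (v.1.2.1 : ℕ) ≤ (w.1.2.1 : ℕ) ∧
        (v.1.2.2 : ℕ) ≤ (w.1.2.2 : ℕ) then (1 : ℤ) else 0

/-- The number of plane partitions fitting in an `a × b × c` box: weakly decreasing
arrays with at most `a` rows, `b` columns, entries at most `c`. -/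
def PPcount (a b c : ℕ) : ℕ :=
  Fintype.card {p : Fin a → Fin b → Fin (c + 1) //
    ∀ i i' j j', i ≤ i' → j ≤ j' → (p i' j' : ℕ) ≤ (p i j : ℕ)}

/-- The permanent of the (square) middle multiplication matrix `U_m`, as a sum over
bijections between the monomial bases. -/
noncomputable def permU (a b c : ℕ) : ℤ :=
  ∑ σ : Mon (a+b) (a+c) (b+c) (a+b+c-2) ≃ Mon (a+b) (a+c) (b+c) (a+b+c-2+1),
    ∏ v, Umat (a+b) (a+c) (b+c) (a+b+c-2) (σ v) v

/-!
A nonzero term of the determinant or the permanent of `U_r` comes from a bijection `σ` sending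
every monomial `v` of degree `r` to one of `v x`, `v y`, `v z`. Order the monomials by their
`z`-exponent (their *level*), then by their `x`-exponent. An inversion of such a `σ` is a pair
`q < p` in which `q` is multiplied by `z` and `p` is not, `p` lying either on the level of `q`
to its right, or on the next level with `σ p` to the left of `q`. Since the level `k + 1` of
degree `r + 1` is a copy of the level `k` of degree `r`, the monomials of the second kind are
exactly as many as those of level `k` left of `q`, so each `q` on level `k` that is multiplied
by `z` contributes the number of monomials of level `k` that are not. The number of inversions
is therefore `∑ₖ zₖ nₖ`, where `zₖ` and `nₖ` count the monomials of level `k` multiplied by `z`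
or not; these are determined by the sizes of the levels, hence do not depend on `σ`, and all
nonzero terms of the determinant carry the same sign.
-/

open Finset Equiv

theorem Equiv.Perm.signAux_eq_sign {n : ℕ} (f : Perm (Fin n)) : f.signAux = sign f := by
  induction f using swap_induction_on with
  | one => rw [signAux_one, sign_one]
  | swap_mul f x y hxy ih => rw [signAux_mul, sign_mul, signAux_swap hxy, sign_swap hxy, ih]

section Inversions

variable {α β : Type*} [Fintype α] [LinearOrder α] [LinearOrder β]

def Equiv.invCount (f : α ≃ β) : ℕ :=
  #{pq : α × α | pq.1 < pq.2 ∧ f pq.2 < f pq.1}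

theorem Equiv.invCount_eq_sum (f : α ≃ β) :
    f.invCount = ∑ q, #{p | q < p ∧ f p < f q} := by
  rw [Equiv.invCount, card_filter, Fintype.sum_prod_type]
  simp only [card_filter]

theorem Equiv.signAux_eq_pow_invCount {n : ℕ} (f : α ≃ β) (oα : Fin n ≃o α)
    (oβ : Fin n ≃o β) :
    Perm.signAux ((oα.toEquiv.trans f).trans oβ.symm.toEquiv) = (-1) ^ f.invCount := by
  set F := (oα.toEquiv.trans f).trans oβ.symm.toEquiv
  rw [Perm.signAux, prod_ite, prod_const, prod_const_one, mul_one, Equiv.invCount]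
  congr 1
  refine card_nbij' (fun x => (oα x.2, oα x.1)) (fun pq => ⟨oα.symm pq.2, oα.symm pq.1⟩) ?_ ?_
    (fun x _ => by simp) (fun pq _ => by simp)
  · intro x hx
    simp only [coe_filter, Set.mem_ofPred_eq, Perm.mem_finPairsLT, mem_univ, true_and] at hx ⊢
    refine ⟨oα.lt_iff_lt.2 hx.1, ?_⟩
    have hne : F x.1 ≠ F x.2 := fun h => hx.1.ne' (F.injective h)
    simpa [F] using oβ.symm.lt_iff_lt.1 (lt_of_le_of_ne hx.2 hne)
  · intro pq hpq
    simp only [coe_filter, Set.mem_ofPred_eq, Perm.mem_finPairsLT, mem_univ, true_and] at hpq ⊢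
    refine ⟨oα.symm.lt_iff_lt.2 hpq.1, ?_⟩
    simpa [F] using (oβ.symm.lt_iff_lt.2 hpq.2).le

theorem Equiv.sign_trans_symm [DecidableEq α] [Fintype β] (f g : α ≃ β) :
    Perm.sign (f.trans g.symm) = (-1) ^ (f.invCount + g.invCount) := by
  let oα := Fintype.orderIsoFinOfCardEq α rfl
  let oβ := Fintype.orderIsoFinOfCardEq β (Fintype.card_congr f).symm
  let F := (oα.toEquiv.trans f).trans oβ.symm.toEquiv
  let G := (oα.toEquiv.trans g).trans oβ.symm.toEquiv
  have hconj : (oα.toEquiv.trans (f.trans g.symm)).trans oα.toEquiv.symm = G⁻¹ * F := by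
    ext x; simp [F, G, Perm.mul_apply]
  rw [← Perm.sign_trans_trans_symm _ oα.toEquiv, hconj, ← Perm.signAux_eq_sign,
    Perm.signAux_mul, Perm.signAux_inv, g.signAux_eq_pow_invCount, f.signAux_eq_pow_invCount,
    pow_add, mul_comm]

end Inversions

theorem Matrix.det_eq_permanent_or_neg {n R : Type*} [Fintype n] [DecidableEq n] [CommRing R]
    (M : Matrix n n R) (h : ∀ σ τ : Perm n, ∏ i, M (σ i) i ≠ 0 → ∏ i, M (τ i) i ≠ 0 →
      Perm.sign σ = Perm.sign τ) :
    M.det = M.permanent ∨ M.det = -M.permanent := by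
  by_cases hex : ∃ τ : Perm n, ∏ i, M (τ i) i ≠ 0
  · obtain ⟨τ, hτ⟩ := hex
    have hdet : M.det = Perm.sign τ • M.permanent := by
      rw [Matrix.det_apply, Matrix.permanent, smul_sum]
      refine sum_congr rfl fun σ _ => ?_
      by_cases hσ : ∏ i, M (σ i) i = 0
      · simp [hσ]
      · rw [h σ τ hσ hτ]
    rcases Int.units_eq_one_or (Perm.sign τ) with hs | hs <;> simp [hdet, hs]
  · push Not at hex
    left
    simp [Matrix.det_apply, Matrix.permanent, hex]

namespace Mon

variable {A B C s t k : ℕ}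

def degX (v : Mon A B C s) : ℕ := v.1.1
def degY (v : Mon A B C s) : ℕ := v.1.2.1
def degZ (v : Mon A B C s) : ℕ := v.1.2.2

theorem degX_add_degY_add_degZ (v : Mon A B C s) : v.degX + v.degY + v.degZ = s := v.2

theorem degZ_lt (v : Mon A B C s) : v.degZ < C := v.1.2.2.isLt

theorem ext_of_degX_degZ {v w : Mon A B C s} (hx : v.degX = w.degX) (hz : v.degZ = w.degZ) :
    v = w := by
  have hy : v.degY = w.degY := by
    have := v.degX_add_degY_add_degZ; have := w.degX_add_degY_add_degZ; omega
  exact Subtype.ext (Prod.ext (Fin.ext hx) (Prod.ext (Fin.ext hy) (Fin.ext hz)))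

instance : LinearOrder (Mon A B C s) :=
  LinearOrder.lift' (fun v => toLex (v.degZ, v.degX)) fun _ _ h => by
    simp only [toLex_inj, Prod.mk.injEq] at h
    exact ext_of_degX_degZ h.2 h.1

theorem lt_iff {v w : Mon A B C s} :
    v < w ↔ v.degZ < w.degZ ∨ v.degZ = w.degZ ∧ v.degX < w.degX :=
  Prod.Lex.toLex_lt_toLex

theorem card_filter_degZ_succ (hk : k + 1 < C) (n : ℕ) :
    #{w : Mon A B C (s + 1) | w.degZ = k + 1 ∧ w.degX < n} =
      #{v : Mon A B C s | v.degZ = k ∧ v.degX < n} := by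
  refine card_bij'
    (fun w hw => ⟨(w.1.1, w.1.2.1, ⟨k, by omega⟩), by
      have := (mem_filter.1 hw).2.1; have := w.degX_add_degY_add_degZ
      simp only [degX, degY, degZ] at *; omega⟩)
    (fun v hv => ⟨(v.1.1, v.1.2.1, ⟨k + 1, hk⟩), by
      have := (mem_filter.1 hv).2.1; have := v.degX_add_degY_add_degZ
      simp only [degX, degY, degZ] at *; omega⟩) ?_ ?_ ?_ ?_
  all_goals
    intro v hv
    simp only [mem_filter, mem_univ, true_and] at hv
  · exact mem_filter.2 ⟨mem_univ _, rfl, hv.2⟩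
  · exact mem_filter.2 ⟨mem_univ _, rfl, hv.2⟩
  all_goals exact ext_of_degX_degZ rfl (by simp [degZ, ← hv.1])

def Divides (v : Mon A B C s) (w : Mon A B C t) : Prop :=
  v.degX ≤ w.degX ∧ v.degY ≤ w.degY ∧ v.degZ ≤ w.degZ

end Mon

open Mon

section DivisibilityMatching

variable {A B C r k : ℕ}

def IsDivisibilityMatching (σ : Mon A B C r ≃ Mon A B C (r + 1)) : Prop :=
  ∀ v : Mon A B C r, v.Divides (σ v)

def zRaised (σ : Mon A B C r ≃ Mon A B C (r + 1)) (k : ℕ) : Finset (Mon A B C r) :=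
  {v | v.degZ = k ∧ (σ v).degZ = k + 1}

def zKept (σ : Mon A B C r ≃ Mon A B C (r + 1)) (k : ℕ) : Finset (Mon A B C r) :=
  {v | v.degZ = k ∧ (σ v).degZ = k}

theorem disjoint_zRaised_zKept (σ : Mon A B C r ≃ Mon A B C (r + 1)) (k l : ℕ) :
    Disjoint (zRaised σ k) (zKept σ l) :=
  disjoint_filter.2 fun _ _ h₁ h₂ => by omega

theorem disjoint_zKept_zKept (σ : Mon A B C r ≃ Mon A B C (r + 1)) {k l : ℕ} (h : k ≠ l) :
    Disjoint (zKept σ k) (zKept σ l) :=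
  disjoint_filter.2 fun _ _ h₁ h₂ => h (h₁.1.symm.trans h₂.1)

theorem isDivisibilityMatching_of_prod_Umat_ne_zero {σ : Mon A B C r ≃ Mon A B C (r + 1)}
    (h : ∏ v, Umat A B C r (σ v) v ≠ 0) : IsDivisibilityMatching σ := fun v => by
  by_contra hv
  exact h (prod_eq_zero (mem_univ v) (if_neg hv))

namespace IsDivisibilityMatching

variable {σ τ : Mon A B C r ≃ Mon A B C (r + 1)}

theorem apply_cases (hσ : IsDivisibilityMatching σ) (v : Mon A B C r) :
    ((σ v).degZ = v.degZ + 1 ∧ (σ v).degX = v.degX) ∨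
      ((σ v).degZ = v.degZ ∧ v.degX ≤ (σ v).degX ∧ (σ v).degX ≤ v.degX + 1) := by
  have := hσ v; have := v.degX_add_degY_add_degZ; have := (σ v).degX_add_degY_add_degZ
  simp only [Divides] at *
  omega

theorem filter_degZ_eq (hσ : IsDivisibilityMatching σ) (k : ℕ) :
    ({v | v.degZ = k} : Finset (Mon A B C r)) = zRaised σ k ∪ zKept σ k := by
  ext v
  have := hσ.apply_cases v
  simp only [zRaised, zKept, mem_union, mem_filter, mem_univ, true_and]
  omega

theorem filter_degZ_apply_eq_zero (hσ : IsDivisibilityMatching σ) :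
    ({v | (σ v).degZ = 0} : Finset (Mon A B C r)) = zKept σ 0 := by
  ext v
  have := hσ.apply_cases v
  simp only [zKept, mem_filter, mem_univ, true_and]
  omega

theorem filter_degZ_apply_eq_succ (hσ : IsDivisibilityMatching σ) (k : ℕ) :
    ({v | (σ v).degZ = k + 1} : Finset (Mon A B C r)) = zRaised σ k ∪ zKept σ (k + 1) := by
  ext v
  have := hσ.apply_cases v
  simp only [zRaised, zKept, mem_union, mem_filter, mem_univ, true_and]
  omega

theorem card_zRaised_eq_and_card_zKept_eq (hσ : IsDivisibilityMatching σ)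
    (hτ : IsDivisibilityMatching τ) (k : ℕ) :
    #(zRaised σ k) = #(zRaised τ k) ∧ #(zKept σ k) = #(zKept τ k) := by
  have source {ρ : Mon A B C r ≃ Mon A B C (r + 1)} (hρ : IsDivisibilityMatching ρ) (k : ℕ) :
      #{v : Mon A B C r | v.degZ = k} = #(zRaised ρ k) + #(zKept ρ k) := by
    rw [hρ.filter_degZ_eq, card_union_of_disjoint (disjoint_zRaised_zKept ρ k k)]
  have target (ρ : Mon A B C r ≃ Mon A B C (r + 1)) (k : ℕ) :
      #{v | (ρ v).degZ = k} = #{w : Mon A B C (r + 1) | w.degZ = k} :=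
    card_equiv ρ (by simp)
  induction k with
  | zero =>
    have hσ₀ := target σ 0; have hτ₀ := target τ 0
    rw [hσ.filter_degZ_apply_eq_zero] at hσ₀
    rw [hτ.filter_degZ_apply_eq_zero] at hτ₀
    have := source hσ 0; have := source hτ 0
    omega
  | succ k ih =>
    have hσ₁ := target σ (k + 1); have hτ₁ := target τ (k + 1)
    rw [hσ.filter_degZ_apply_eq_succ, card_union_of_disjoint (disjoint_zRaised_zKept σ _ _)]
      at hσ₁
    rw [hτ.filter_degZ_apply_eq_succ, card_union_of_disjoint (disjoint_zRaised_zKept τ _ _)]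
      at hτ₁
    have := source hσ (k + 1); have := source hτ (k + 1)
    omega

theorem lt_and_apply_lt_iff (hσ : IsDivisibilityMatching σ) (q p : Mon A B C r) :
    q < p ∧ σ p < σ q ↔ q ∈ zRaised σ q.degZ ∧
      (p ∈ zKept σ q.degZ ∧ q.degX < p.degX ∨
        p ∈ zKept σ (q.degZ + 1) ∧ (σ p).degX < q.degX) := by
  have hp := hσ.apply_cases p
  have hq := hσ.apply_cases q
  have hinj : (p.degX = q.degX ∧ p.degZ = q.degZ) ∨
      ¬((σ p).degX = (σ q).degX ∧ (σ p).degZ = (σ q).degZ) := by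
    by_cases h : p = q
    · exact .inl ⟨congrArg _ h, congrArg _ h⟩
    · exact .inr fun h' => h (σ.injective (ext_of_degX_degZ h'.1 h'.2))
  simp only [lt_iff, zRaised, zKept, mem_filter, mem_univ, true_and]
  omega

theorem card_zKept_succ_filter (hσ : IsDivisibilityMatching σ) (hk : k + 1 < C) (n : ℕ) :
    #{v ∈ zKept σ (k + 1) | (σ v).degX < n} = #{v ∈ zKept σ k | v.degX < n} := by
  have htarget : ({v | (σ v).degZ = k + 1 ∧ (σ v).degX < n} : Finset (Mon A B C r)) =
      {v ∈ zRaised σ k | v.degX < n} ∪ {v ∈ zKept σ (k + 1) | (σ v).degX < n} := by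
    ext v
    have := hσ.apply_cases v
    simp only [zRaised, zKept, mem_union, mem_filter, mem_univ, true_and]
    omega
  have hsource : ({v | v.degZ = k ∧ v.degX < n} : Finset (Mon A B C r)) =
      {v ∈ zRaised σ k | v.degX < n} ∪ {v ∈ zKept σ k | v.degX < n} := by
    ext v
    have := hσ.apply_cases v
    simp only [zRaised, zKept, mem_union, mem_filter, mem_univ, true_and]
    omega
  have hpreimage : #{v | (σ v).degZ = k + 1 ∧ (σ v).degX < n} =
      #{w : Mon A B C (r + 1) | w.degZ = k + 1 ∧ w.degX < n} :=
    card_equiv σ (by simp)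
  have hshift := card_filter_degZ_succ (A := A) (B := B) (s := r) hk n
  rw [← hpreimage, htarget, hsource,
    card_union_of_disjoint (disjoint_filter_filter (disjoint_zRaised_zKept σ k _)),
    card_union_of_disjoint (disjoint_filter_filter (disjoint_zRaised_zKept σ k _))] at hshift
  omega

theorem card_inversions_of_mem_zRaised (hσ : IsDivisibilityMatching σ) {q : Mon A B C r}
    (hq : q ∈ zRaised σ k) : #{p | q < p ∧ σ p < σ q} = #(zKept σ k) := by
  have hqk : q.degZ = k := (mem_filter.1 hq).2.1
  have hk : k + 1 < C := by have := (σ q).degZ_lt; have := (mem_filter.1 hq).2.2; omega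
  have hinv : ({p | q < p ∧ σ p < σ q} : Finset (Mon A B C r)) =
      {p ∈ zKept σ k | q.degX < p.degX} ∪ {p ∈ zKept σ (k + 1) | (σ p).degX < q.degX} := by
    ext p
    simp only [hσ.lt_and_apply_lt_iff, hqk, hq, true_and, mem_union, mem_filter, mem_univ]
  have hsplit : {p ∈ zKept σ k | ¬q.degX < p.degX} = {p ∈ zKept σ k | p.degX < q.degX} := by
    refine filter_congr fun p hp => not_lt.trans (le_iff_lt_or_eq.trans (or_iff_left ?_))
    intro hpq
    have hpk : p.degZ = q.degZ := by rw [hqk]; exact (mem_filter.1 hp).2.1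
    exact disjoint_left.1 (disjoint_zRaised_zKept σ k k) hq (ext_of_degX_degZ hpq hpk ▸ hp)
  rw [hinv, card_union_of_disjoint
      (disjoint_filter_filter (disjoint_zKept_zKept σ k.lt_succ_self.ne)),
    hσ.card_zKept_succ_filter hk, ← hsplit, card_filter_add_card_filter_not]

theorem invCount_eq_sum (hσ : IsDivisibilityMatching σ) :
    σ.invCount = ∑ k ∈ range C, #(zRaised σ k) * #(zKept σ k) := by
  rw [σ.invCount_eq_sum, ← sum_fiberwise_of_maps_to (g := degZ) (t := range C)
    fun q _ => mem_range.2 q.degZ_lt]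
  refine sum_congr rfl fun k _ => ?_
  have hkept : ∀ q ∈ zKept σ k, #{p | q < p ∧ σ p < σ q} = 0 := fun q hq => by
    refine card_eq_zero.2 (filter_eq_empty_iff.2 fun p _ => ?_)
    rw [hσ.lt_and_apply_lt_iff]
    simp only [zRaised, zKept, mem_filter, mem_univ, true_and] at hq ⊢
    omega
  rw [hσ.filter_degZ_eq k, sum_union (disjoint_zRaised_zKept σ k k),
    sum_congr rfl fun q hq => hσ.card_inversions_of_mem_zRaised hq, sum_congr rfl hkept,
    sum_const, sum_const_zero, smul_eq_mul, add_zero]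

theorem invCount_eq (hσ : IsDivisibilityMatching σ) (hτ : IsDivisibilityMatching τ) :
    σ.invCount = τ.invCount := by
  simp only [hσ.invCount_eq_sum, hτ.invCount_eq_sum,
    (hσ.card_zRaised_eq_and_card_zKept_eq hτ _).1, (hσ.card_zRaised_eq_and_card_zKept_eq hτ _).2]

theorem sign_trans_symm_eq_one (hσ : IsDivisibilityMatching σ) (hτ : IsDivisibilityMatching τ) :
    Perm.sign (σ.trans τ.symm) = 1 := by
  rw [Equiv.sign_trans_symm, hσ.invCount_eq hτ, ← two_mul, pow_mul]
  simp

end IsDivisibilityMatching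

theorem det_submatrix_Umat_eq_permanent_or_neg (e : Mon A B C r ≃ Mon A B C (r + 1)) :
    ((Umat A B C r).submatrix e id).det = ((Umat A B C r).submatrix e id).permanent ∨
      ((Umat A B C r).submatrix e id).det = -((Umat A B C r).submatrix e id).permanent := by
  refine Matrix.det_eq_permanent_or_neg _ fun σ τ hσ hτ => ?_
  have hsign := (isDivisibilityMatching_of_prod_Umat_ne_zero (σ := σ.trans e) hσ)
    |>.sign_trans_symm_eq_one (isDivisibilityMatching_of_prod_Umat_ne_zero (σ := τ.trans e) hτ)
  have hcomp : (σ.trans e).trans (τ.trans e).symm = τ⁻¹ * σ := by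
    ext v; simp [Perm.mul_apply]
  rw [hcomp, map_mul, Perm.sign_inv] at hsign
  exact (eq_inv_of_mul_eq_one_right hsign).trans (Int.units_inv_eq_self _)

theorem sum_prod_Umat_eq_permanent (e : Mon A B C r ≃ Mon A B C (r + 1)) :
    ∑ σ : Mon A B C r ≃ Mon A B C (r + 1), ∏ v, Umat A B C r (σ v) v =
      ((Umat A B C r).submatrix e id).permanent :=
  Fintype.sum_equiv ((Equiv.refl _).equivCongr e.symm) _ _ fun σ => by simp

end DivisibilityMatching

theorem stmt10 (a b c : ℕ)
    (e : Mon (a+b) (a+c) (b+c) (a+b+c-2) ≃ Mon (a+b) (a+c) (b+c) (a+b+c-2+1)) :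
    ((Umat (a+b) (a+c) (b+c) (a+b+c-2)).submatrix e id).det = permU a b c ∨
    ((Umat (a+b) (a+c) (b+c) (a+b+c-2)).submatrix e id).det = -permU a b c := by
  rw [permU, sum_prod_Umat_eq_permanent e]
  exact det_submatrix_Umat_eq_permanent_or_neg e
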